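/- arXiv:0904.3142 — 2 statements merged into one kernel-verified Lean document; each statement's English description precedes it below -/
import Mathlib

section
/- Let n ≥ 2 and, for j = 1, 2, let A_j be the n×n real matrix a_j I_n + E_{1,n} (equal to a_j on the diagonal, 1 in the entry in row 1 and column n, and 0 elsewhere), where a_1 > 1 and a_2 = −1. Then: (i) the set {x ∈ ℝ^n : J_{(A_1,A_2)}(x) = ℝ^n} equals {(x_1, 0, …, 0)ᵗ : x_1 ∈ ℝ}; in particular the pair (A_1, A_2) is locally hypercyclic; and (ii) the pair (A_1, A_2) is not hypercyclic, i.e. no vector y ∈ ℝ^n has {A_1^k A_2^l y : k, l ∈ ℕ∪{0}} dense in ℝ^n. -/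
open Filter Topology

/-- The extended limit set `J_{(A,B)}(x)` of a pair of `n × n` real matrices acting on
`ℝⁿ`. -/
def JSetPair {n : ℕ} (A B : Matrix (Fin n) (Fin n) ℝ) (x : Fin n → ℝ) :
    Set (Fin n → ℝ) :=
  {y | ∃ (u : ℕ → Fin n → ℝ) (k l : ℕ → ℕ),
    Tendsto u atTop (𝓝 x) ∧
    Tendsto (fun m => k m + l m) atTop atTop ∧
    Tendsto (fun m => (A ^ k m * B ^ l m).mulVec (u m)) atTop (𝓝 y)}

lemma mulE {n : ℕ} (i0 i1 : Fin n) (h : i1 ≠ i0) (c d c' d' : ℝ) :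
    (c • (1 : Matrix (Fin n) (Fin n) ℝ) + d • Matrix.single i0 i1 1) *
    (c' • (1 : Matrix (Fin n) (Fin n) ℝ) + d' • Matrix.single i0 i1 1) =
    (c * c') • (1 : Matrix (Fin n) (Fin n) ℝ)
      + (c * d' + d * c') • Matrix.single i0 i1 1 := by
  have hEE : (Matrix.single i0 i1 (1:ℝ)) * Matrix.single i0 i1 1 = 0 :=
    Matrix.single_mul_single_of_ne 1 i0 i1 i0 h 1
  rw [add_mul, mul_add, mul_add, Matrix.smul_mul, Matrix.smul_mul, Matrix.smul_mul,
    Matrix.smul_mul, Matrix.mul_smul, Matrix.mul_smul, Matrix.mul_smul, Matrix.mul_smul,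
    hEE, one_mul, mul_one, one_mul, smul_zero, smul_zero, add_zero]
  simp only [smul_smul]
  rw [add_smul, mul_comm d c']
  abel

lemma powE {n : ℕ} (i0 i1 : Fin n) (h : i1 ≠ i0) (a : ℝ) (ha : a ≠ 0) (k : ℕ) :
    (a • (1 : Matrix (Fin n) (Fin n) ℝ) + Matrix.single i0 i1 1) ^ k
    = (a ^ k) • (1 : Matrix (Fin n) (Fin n) ℝ)
      + (k * a ^ k / a) • Matrix.single i0 i1 1 := by
  induction k with
  | zero => simp
  | succ k ih =>
    have hb : (a • (1 : Matrix (Fin n) (Fin n) ℝ) + Matrix.single i0 i1 1)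
        = a • (1 : Matrix (Fin n) (Fin n) ℝ) + (1:ℝ) • Matrix.single i0 i1 1 := by
      rw [one_smul]
    rw [pow_succ, ih, hb, mulE i0 i1 h]
    have h1 : a ^ k * a = a ^ (k+1) := (pow_succ a k).symm
    have h2 : a ^ k * 1 + (↑k * a ^ k / a) * a = (↑(k+1) * a ^ (k+1) / a) := by
      field_simp
      push_cast
      ring
    rw [h1, h2]

lemma mulVecE {n : ℕ} (i0 i1 : Fin n) (c d : ℝ) (u : Fin n → ℝ) (j : Fin n) :
    ((c • (1 : Matrix (Fin n) (Fin n) ℝ) + d • Matrix.single i0 i1 1).mulVec u) j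
    = c * u j + (if j = i0 then d * u i1 else 0) := by
  rw [Matrix.add_mulVec, Matrix.smul_mulVec, Matrix.smul_mulVec, Matrix.one_mulVec]
  simp only [Pi.add_apply, Pi.smul_apply, smul_eq_mul]
  congr 1
  have : (Matrix.single i0 i1 (1:ℝ)).mulVec u j = if j = i0 then u i1 else 0 := by
    simp only [Matrix.mulVec, dotProduct, Matrix.single, Matrix.of_apply]
    by_cases hj : j = i0
    · subst hj
      rw [if_pos rfl]
      rw [Finset.sum_eq_single i1] <;> simp +contextual [eq_comm]
    · rw [if_neg hj]
      apply Finset.sum_eq_zero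
      intro i _
      simp [Ne.symm hj]
  rw [this]
  by_cases hj : j = i0 <;> simp [hj]

set_option maxHeartbeats 1000000 in
/-- For `n ≥ 2`, let `Aⱼ = aⱼ Iₙ + E₁ₙ` (`j = 1, 2`) be the `n × n` real matrices with
`aⱼ` on the diagonal, `1` in the `(1,n)` entry and `0` elsewhere, where `a₁ > 1` and
`a₂ = −1`. Then `{x : J_{(A₁,A₂)}(x) = ℝⁿ} = {(x₁,0,…,0)ᵗ}`, so `(A₁,A₂)` is a locally
hypercyclic pair; moreover `(A₁,A₂)` is not hypercyclic. -/
theorem upper_triangular_pair_locally_hypercyclic_not_hypercyclic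
    (n : ℕ) (hn : 2 ≤ n) (a₁ : ℝ) (ha₁ : 1 < a₁)
    (A₁ A₂ : Matrix (Fin n) (Fin n) ℝ)
    (hA₁ : A₁ = a₁ • (1 : Matrix (Fin n) (Fin n) ℝ) +
      Matrix.single ⟨0, by omega⟩ ⟨n - 1, by omega⟩ (1 : ℝ))
    (hA₂ : A₂ = (-1 : ℝ) • (1 : Matrix (Fin n) (Fin n) ℝ) +
      Matrix.single ⟨0, by omega⟩ ⟨n - 1, by omega⟩ (1 : ℝ)) :
    ({x : Fin n → ℝ | JSetPair A₁ A₂ x = Set.univ}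
        = {x : Fin n → ℝ | ∀ j : Fin n, j ≠ ⟨0, by omega⟩ → x j = 0}) ∧
    (∃ x : Fin n → ℝ, x ≠ 0 ∧ JSetPair A₁ A₂ x = Set.univ) ∧
    ¬ ∃ y : Fin n → ℝ, Dense {v : Fin n → ℝ | ∃ k l : ℕ,
        (A₁ ^ k * A₂ ^ l).mulVec y = v} := by
  have hn0 : 0 < n := by omega
  have hn1 : n - 1 < n := by omega
  set i0 : Fin n := ⟨0, hn0⟩ with hi0
  set i1 : Fin n := ⟨n - 1, hn1⟩ with hi1
  have hne : i1 ≠ i0 := by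
    simp only [hi0, hi1, Ne, Fin.mk.injEq]
    omega
  have ha₁pos : (0:ℝ) < a₁ := by linarith
  have ha0 : a₁ ≠ 0 := ne_of_gt ha₁pos
  have hpowpos : ∀ k : ℕ, (0:ℝ) < a₁ ^ k := fun k => pow_pos ha₁pos k
  have hpow1 : ∀ k : ℕ, (1:ℝ) ≤ a₁ ^ k := fun k => one_le_pow₀ ha₁.le
  -- the key mulVec formula
  have key : ∀ (k l : ℕ) (u : Fin n → ℝ) (j : Fin n),
      ((A₁ ^ k * A₂ ^ l).mulVec u) j
      = ((-1:ℝ)^l * a₁^k) * u j +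
        (if j = i0 then ((-1:ℝ)^l * a₁^k * ((k:ℝ)/a₁ - (l:ℝ))) * u i1 else 0) := by
    intro k l u j
    rw [hA₁, hA₂, powE i0 i1 hne a₁ ha0 k, powE i0 i1 hne (-1) (by norm_num) l,
      mulE i0 i1 hne, mulVecE]
    have h1 : a₁ ^ k * (-1:ℝ)^l = (-1:ℝ)^l * a₁^k := by ring
    have h2 : a₁ ^ k * ((l:ℝ) * (-1:ℝ)^l / (-1)) + ((k:ℝ) * a₁^k / a₁) * (-1:ℝ)^l
        = (-1:ℝ)^l * a₁^k * ((k:ℝ)/a₁ - (l:ℝ)) := by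
      ring
    rw [h1, h2]
  -- forward direction of (i)
  have hfwd : ∀ x : Fin n → ℝ, JSetPair A₁ A₂ x = Set.univ → ∀ j : Fin n, j ≠ i0 → x j = 0 := by
    intro x hJ j hj
    by_contra hxj
    have h0 : (0 : Fin n → ℝ) ∈ JSetPair A₁ A₂ x := by rw [hJ]; trivial
    obtain ⟨u, k, l, hu, -, hv⟩ := h0
    have h1 : Tendsto (fun m => |u m j|) atTop (𝓝 |x j|) :=
      (continuous_abs.tendsto _).comp (((continuous_apply j).tendsto x).comp hu)
    have h2 : Tendsto (fun m => |((A₁ ^ k m * A₂ ^ l m).mulVec (u m)) j|) atTop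
        (𝓝 |(0 : Fin n → ℝ) j|) :=
      (continuous_abs.tendsto _).comp (((continuous_apply j).tendsto _).comp hv)
    have h3 : ∀ m, |u m j| ≤ |((A₁ ^ k m * A₂ ^ l m).mulVec (u m)) j| := by
      intro m
      rw [key (k m) (l m) (u m) j, if_neg hj, add_zero, abs_mul, abs_mul, abs_pow,
        abs_neg, abs_one, one_pow, one_mul, abs_of_pos (hpowpos (k m))]
      nlinarith [abs_nonneg (u m j), hpow1 (k m)]
    have h4 : |x j| ≤ |(0 : Fin n → ℝ) j| := le_of_tendsto_of_tendsto' h1 h2 h3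
    rw [Pi.zero_apply, abs_zero] at h4
    exact hxj (abs_eq_zero.mp (le_antisymm h4 (abs_nonneg _)))
  -- backward direction of (i): the construction
  have hback : ∀ x : Fin n → ℝ, (∀ j : Fin n, j ≠ i0 → x j = 0) →
      JSetPair A₁ A₂ x = Set.univ := by
    intro x hx
    apply Set.eq_univ_iff_forall.mpr
    intro y
    obtain ⟨b, hb⟩ : ∃ b : ℝ, b = y i1 := ⟨_, rfl⟩
    obtain ⟨σ, hσdef⟩ : ∃ σ : ℝ, σ = if 0 ≤ b then 1 else -1 := ⟨_, rfl⟩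
    have hσ : σ = 1 ∨ σ = -1 := by
      rw [hσdef]; split <;> simp
    have hσb : 0 ≤ σ * b := by
      rw [hσdef]; split <;> rename_i h
      · simpa using h
      · push_neg at h; nlinarith
    have hσσ : σ * σ = 1 := by rcases hσ with h | h <;> rw [h] <;> norm_num
    have hσne : σ ≠ 0 := by rcases hσ with h | h <;> rw [h] <;> norm_num
    have hσabs : |σ| = 1 := by rcases hσ with h | h <;> rw [h] <;> norm_num
    obtain ⟨η, hηdef⟩ : ∃ η : ℕ → ℝ, η = fun m : ℕ => b + σ / ((m:ℝ) + 1) := ⟨_, rfl⟩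
    have hm1 : ∀ m : ℕ, (0:ℝ) < (m:ℝ) + 1 := fun m => by positivity
    have hησ : ∀ m, 0 < σ * η m := by
      intro m
      have h1 : σ * η m = σ * b + (σ * σ) / ((m:ℝ) + 1) := by rw [hηdef]; ring
      rw [h1, hσσ]
      have h2 : (0:ℝ) < 1 / ((m:ℝ) + 1) := by positivity
      linarith
    have hηne : ∀ m, η m ≠ 0 := by
      intro m h
      have h1 := hησ m; rw [h, mul_zero] at h1; exact lt_irrefl _ h1
    have hηbd : ∀ m, |η m| ≤ |b| + 1 := by
      intro m
      have h0 : η m = b + σ / ((m:ℝ)+1) := by rw [hηdef]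
      rw [h0]
      calc |b + σ / ((m:ℝ)+1)| ≤ |b| + |σ / ((m:ℝ)+1)| := abs_add_le _ _
        _ ≤ |b| + 1 := by
            rw [abs_div, hσabs, abs_of_pos (hm1 m)]
            have h2 := hm1 m
            have h3 : 1 / ((m:ℝ)+1) ≤ 1 := by
              rw [div_le_one h2]
              have : (0:ℝ) ≤ (m:ℝ) := Nat.cast_nonneg m
              linarith
            linarith
    obtain ⟨p, hpdef⟩ : ∃ p : ℕ, p = if 0 ≤ x i0 * σ then 0 else 1 := ⟨_, rfl⟩
    have hpx : 0 ≤ (-1:ℝ)^p * (x i0 * σ) := by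
      rw [hpdef]; split <;> rename_i h
      · simpa using h
      · push_neg at h; simp only [pow_one]; nlinarith
    have hp1 : p ≤ 1 := by rw [hpdef]; split <;> omega
    obtain ⟨c, hcdef⟩ : ∃ c : ℕ → ℝ, c = fun m : ℕ => (-1:ℝ)^p * a₁^m := ⟨_, rfl⟩
    have hcm : ∀ m, c m = (-1:ℝ)^p * a₁^m := fun m => by rw [hcdef]
    have hnegp : ((-1:ℝ)^p) ≠ 0 := pow_ne_zero _ (by norm_num)
    have hcne : ∀ m, c m ≠ 0 := fun m => by rw [hcm m]; exact mul_ne_zero hnegp (hpowpos m).ne'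
    have hcabs : ∀ m, |c m| = a₁ ^ m := by
      intro m
      rw [hcm m, abs_mul, abs_pow, abs_neg, abs_one, one_pow, one_mul,
        abs_of_pos (hpowpos m)]
    obtain ⟨t, htdef⟩ : ∃ t : ℕ → ℝ, t = fun m : ℕ => (m:ℝ) / a₁ + c m * x i0 / η m := ⟨_, rfl⟩
    have htm : ∀ m, t m = (m:ℝ) / a₁ + c m * x i0 / η m := fun m => by rw [htdef]
    have ht2 : ∀ m, 0 ≤ c m * x i0 / η m := by
      intro m
      have e1 : c m * x i0 / η m = (σ * (c m * x i0)) / (σ * η m) :=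
        (mul_div_mul_left _ _ hσne).symm
      rw [e1]
      apply div_nonneg _ (hησ m).le
      have e2 : σ * (c m * x i0) = ((-1:ℝ)^p * (x i0 * σ)) * a₁ ^ m := by
        rw [hcm m]; ring
      rw [e2]
      exact mul_nonneg hpx (hpowpos m).le
    have ht0 : ∀ m, 0 ≤ t m := by
      intro m
      rw [htm m]
      have h1 : (0:ℝ) ≤ (m:ℝ) / a₁ := div_nonneg (Nat.cast_nonneg m) ha₁pos.le
      have h2 := ht2 m
      linarith
    obtain ⟨l, hldef⟩ : ∃ l : ℕ → ℕ, l = fun m : ℕ => p + 2 * ⌊(t m - p) / 2⌋₊ := ⟨_, rfl⟩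
    have hlm : ∀ m, l m = p + 2 * ⌊(t m - p) / 2⌋₊ := fun m => by rw [hldef]
    have hlpar : ∀ m, ((-1:ℝ)) ^ (l m) = (-1:ℝ)^p := by
      intro m
      rw [hlm m, pow_add, pow_mul, neg_one_sq, one_pow, mul_one]
    have hlclose : ∀ m, |(l m : ℝ) - t m| ≤ 2 := by
      intro m
      have hl : (l m : ℝ) = (p:ℝ) + 2 * (⌊(t m - p)/2⌋₊ : ℝ) := by
        rw [hlm m]; push_cast; ring
      by_cases hcase : (p:ℝ) ≤ t m
      · have h1 : ((⌊(t m - p)/2⌋₊ : ℝ)) ≤ (t m - p)/2 := Nat.floor_le (by linarith)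
        have h2 : (t m - p)/2 - 1 < (⌊(t m - p)/2⌋₊ : ℝ) := Nat.sub_one_lt_floor _
        rw [abs_le]
        constructor <;> linarith
      · push_neg at hcase
        have hpone : p = 1 := by
          rcases Nat.eq_zero_or_pos p with h | h
          · exfalso; rw [h] at hcase; push_cast at hcase; linarith [ht0 m]
          · omega
        have htm1 : t m < 1 := by rw [hpone] at hcase; push_cast at hcase; linarith
        have hfl : ⌊(t m - p)/2⌋₊ = 0 := by
          apply Nat.floor_eq_zero.mpr
          rw [hpone]; push_cast; linarith
        rw [abs_le, hl, hfl, hpone]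
        push_cast
        constructor <;> linarith [ht0 m]
    obtain ⟨u, hudef⟩ : ∃ u : ℕ → Fin n → ℝ, u = fun (m : ℕ) (j : Fin n) =>
        if j = i0 then (y i0 + ((l m : ℝ) - (m:ℝ)/a₁) * η m) / c m
        else if j = i1 then η m / c m else y j / c m := ⟨_, rfl⟩
    have hu0 : ∀ m, u m i0 = (y i0 + ((l m : ℝ) - (m:ℝ)/a₁) * η m) / c m := by
      intro m; rw [hudef]; simp
    have hu1 : ∀ m, u m i1 = η m / c m := by
      intro m; rw [hudef]; simp [hne]
    have huj : ∀ m, ∀ j : Fin n, j ≠ i0 → j ≠ i1 → u m j = y j / c m := by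
      intro m j hj0 hj1; rw [hudef]; simp [hj0, hj1]
    have hzero : ∀ (f : ℕ → ℝ) (C : ℝ), (∀ m, |f m| ≤ C) →
        Tendsto (fun m => f m / c m) atTop (𝓝 0) := by
      intro f C hf
      apply squeeze_zero_norm (a := fun m => C / a₁ ^ m)
      · intro m
        rw [Real.norm_eq_abs, abs_div, hcabs]
        exact div_le_div_of_nonneg_right (hf m) (hpowpos m).le
      · exact Tendsto.const_div_atTop (tendsto_pow_atTop_atTop_of_one_lt ha₁) C
    refine ⟨u, fun m => m, l, ?_, ?_, ?_⟩
    · rw [tendsto_pi_nhds]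
      intro j
      by_cases hj0 : j = i0
      · subst hj0
        have hrw : ∀ m, u m i0 = x i0 + (y i0 + ((l m:ℝ) - t m) * η m) / c m := by
          intro m
          rw [hu0 m, htm m]
          field_simp [hcne m, hηne m]
          ring
        apply Tendsto.congr (fun m => (hrw m).symm)
        have hfin : Tendsto (fun m => x i0 + (y i0 + ((l m:ℝ) - t m) * η m) / c m) atTop
            (𝓝 (x i0 + 0)) := by
          apply tendsto_const_nhds.add
          apply hzero _ (|y i0| + 2 * (|b| + 1))
          intro m
          calc |y i0 + ((l m:ℝ) - t m) * η m| ≤ |y i0| + |(l m:ℝ) - t m| * |η m| := by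
                rw [← abs_mul]; exact abs_add_le _ _
            _ ≤ |y i0| + 2 * (|b| + 1) := by
                have h1 := hlclose m
                have h2 := hηbd m
                nlinarith [abs_nonneg ((l m:ℝ) - t m), abs_nonneg (η m)]
        simpa using hfin
      · have hxj : x j = 0 := hx j hj0
        rw [hxj]
        by_cases hj1 : j = i1
        · subst hj1
          exact Tendsto.congr (fun m => (hu1 m).symm) (hzero η (|b| + 1) hηbd)
        · exact Tendsto.congr (fun m => (huj m j hj0 hj1).symm)
            (hzero _ |y j| (fun m => le_refl _))
    · exact tendsto_atTop_mono (fun m => Nat.le_add_right m (l m)) tendsto_id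
    · have hMv : ∀ m, (A₁ ^ m * A₂ ^ (l m)).mulVec (u m)
          = fun j => if j = i1 then η m else y j := by
        intro m
        funext j
        rw [key m (l m) (u m) j, hlpar m]
        by_cases hj0 : j = i0
        · subst hj0
          rw [if_pos rfl, if_neg (fun h => hne h.symm)]
          rw [hu0 m, hu1 m, hcm m]
          field_simp
          ring
        · rw [if_neg hj0, add_zero]
          by_cases hj1 : j = i1
          · subst hj1
            rw [if_pos rfl, hu1 m, hcm m]
            field_simp
          · rw [if_neg hj1, huj m j hj0 hj1, hcm m]
            field_simp
      apply Tendsto.congr (fun m => (hMv m).symm)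
      rw [tendsto_pi_nhds]
      intro j
      by_cases hj1 : j = i1
      · subst hj1
        simp only [if_pos rfl]
        rw [← hb]
        have hηrw : ∀ m, η m = b + σ / ((m:ℝ)+1) := fun m => by rw [hηdef]
        apply Tendsto.congr (fun m => (hηrw m).symm)
        have h1 : Tendsto (fun m : ℕ => (m:ℝ) + 1) atTop atTop :=
          tendsto_atTop_add_const_right atTop 1 tendsto_natCast_atTop_atTop
        have hfin : Tendsto (fun m : ℕ => b + σ / ((m:ℝ)+1)) atTop (𝓝 (b + 0)) :=
          tendsto_const_nhds.add (h1.const_div_atTop σ)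
        rw [add_zero] at hfin
        exact hfin
      · simp only [if_neg hj1]
        exact tendsto_const_nhds
  refine ⟨?_, ?_, ?_⟩
  · ext x
    exact ⟨hfwd x, hback x⟩
  · refine ⟨fun j => if j = i0 then 1 else 0, ?_, hback _ ?_⟩
    · intro h
      have := congrFun h i0
      simp at this
    · intro j hj
      simp [if_neg hj]
  · rintro ⟨y, hy⟩
    have horb : ∀ k l : ℕ, ((A₁ ^ k * A₂ ^ l).mulVec y) i1 = (-1:ℝ)^l * a₁^k * y i1 := by
      intro k l
      rw [key, if_neg hne, add_zero]
    by_cases hyz : y i1 = 0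
    · obtain ⟨w, ⟨k, l, hw⟩, hd⟩ :=
        Metric.mem_closure_iff.mp (hy (fun _ => (1:ℝ))) (1/2) (by norm_num)
      have hw1 : w i1 = 0 := by rw [← hw, horb, hyz, mul_zero]
      have := dist_le_pi_dist (fun _ => (1:ℝ)) w i1
      rw [Real.dist_eq, hw1] at this
      norm_num at this
      linarith
    · set r := |y i1| with hr
      have hrpos : 0 < r := abs_pos.mpr hyz
      obtain ⟨w, ⟨k, l, hw⟩, hd⟩ :=
        Metric.mem_closure_iff.mp
          (hy (fun j => if j = i1 then r/2 else 0)) (r/4) (by positivity)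
      have hw1 : |w i1| = a₁^k * r := by
        rw [← hw, horb, abs_mul, abs_mul, abs_pow, abs_neg, abs_one, one_pow, one_mul,
          abs_of_pos (hpowpos k)]
      have hw2 : r ≤ |w i1| := by
        rw [hw1]
        nlinarith [hpow1 k]
      have h5 := dist_le_pi_dist (fun j => if j = i1 then r/2 else 0) w i1
      rw [Real.dist_eq, if_pos rfl] at h5
      have h6 : |w i1| - r/2 ≤ |r/2 - w i1| := by
        have := abs_sub_abs_le_abs_sub (w i1) (r/2)
        rw [abs_sub_comm] at this
        have hr2 : |r/2| = r/2 := abs_of_pos (by linarith)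
        linarith
      linarith
end

section
/- Let a > 1 be a real number and let θ be a real number that is an irrational multiple of π. Then the set { ( k/(a e^{iθ}) − l ) / ( a^k e^{ikθ} (−1)^l ) : k, l ∈ ℕ } is dense in ℂ. -/
open Filter

lemma nat_step_lemma (β x : ℝ) (hβ : 0 < β) (K : ℕ) :
    ∃ j : ℕ, K ≤ j ∧ ∃ M : ℤ, 0 ≤ (j : ℝ) * β - (x + M * Real.pi) ∧
      (j : ℝ) * β - (x + M * Real.pi) < β := by
  have hπ := Real.pi_pos
  set M : ℤ := ⌈((K : ℝ) * β - x) / Real.pi⌉ with hM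
  have h1 : ((K : ℝ) * β - x) / Real.pi ≤ (M : ℝ) := Int.le_ceil _
  have h1' : (K : ℝ) * β - x ≤ M * Real.pi := (div_le_iff₀ hπ).mp h1
  set y : ℝ := x + M * Real.pi with hy
  have hKy : (K : ℝ) * β ≤ y := by simp only [hy]; linarith
  have hy0 : 0 ≤ y := le_trans (by positivity) hKy
  set j : ℕ := ⌈y / β⌉₊ with hj
  have hjy : y / β ≤ (j : ℝ) := Nat.le_ceil _
  have hjy' : y ≤ (j : ℝ) * β := (div_le_iff₀ hβ).mp hjy
  refine ⟨j, ?_, M, by linarith, ?_⟩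
  · have h2 : (K : ℝ) ≤ y / β := (le_div_iff₀ hβ).mpr hKy
    exact_mod_cast h2.trans hjy
  · have h3 : (j : ℝ) < y / β + 1 := Nat.ceil_lt_add_one (by positivity)
    have h4 : y / β * β = y := div_mul_cancel₀ _ hβ.ne'
    have h5 := mul_lt_mul_of_pos_right h3 hβ
    linarith

lemma exists_nat_mul_near_mod_pi {θ : ℝ} (hθ : Irrational (θ / Real.pi)) (x : ℝ) (K : ℕ)
    {ε : ℝ} (hε : 0 < ε) :
    ∃ k : ℕ, K ≤ k ∧ 0 < k ∧ ∃ M : ℤ, |(k : ℝ) * θ - (x + M * Real.pi)| < ε := by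
  have hπ : (0 : ℝ) < Real.pi := Real.pi_pos
  have hdense : Dense ((AddSubgroup.closure ({θ, Real.pi} : Set ℝ) : AddSubgroup ℝ) : Set ℝ) := by
    rcases AddSubgroup.dense_or_cyclic (AddSubgroup.closure ({θ, Real.pi} : Set ℝ)) with h | ⟨g, hg⟩
    · exact h
    · exfalso
      have hθmem : θ ∈ AddSubgroup.closure ({θ, Real.pi} : Set ℝ) :=
        AddSubgroup.subset_closure (by simp)
      have hπmem : Real.pi ∈ AddSubgroup.closure ({θ, Real.pi} : Set ℝ) :=
        AddSubgroup.subset_closure (by simp)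
      rw [hg, AddSubgroup.mem_closure_singleton] at hθmem hπmem
      obtain ⟨m, hm⟩ := hθmem
      obtain ⟨n, hn⟩ := hπmem
      rw [zsmul_eq_mul] at hm hn
      have hg0 : g ≠ 0 := by
        rintro rfl
        rw [mul_zero] at hn
        exact hπ.ne hn
      have hn0 : (n : ℝ) ≠ 0 := by
        rintro h
        rw [h, zero_mul] at hn
        exact hπ.ne hn
      apply hθ
      refine ⟨(m : ℚ) / (n : ℚ), ?_⟩
      have : θ / Real.pi = (m : ℝ) / (n : ℝ) := by
        rw [← hm, ← hn, mul_div_mul_right _ _ hg0]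
      rw [this]
      push_cast
      ring
  have hmin : 0 < min ε Real.pi := lt_min hε hπ
  obtain ⟨s, hsS, hs1, hs2⟩ := hdense.exists_mem_open isOpen_Ioo
    ⟨min ε Real.pi / 2, half_pos hmin, half_lt_self hmin⟩
  rw [SetLike.mem_coe, AddSubgroup.mem_closure_pair] at hsS
  obtain ⟨m, n, hmn⟩ := hsS
  rw [zsmul_eq_mul, zsmul_eq_mul] at hmn
  have hsε : s < ε := lt_of_lt_of_le hs2 (min_le_left _ _)
  have hsπ : s < Real.pi := lt_of_lt_of_le hs2 (min_le_right _ _)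
  have hm0 : m ≠ 0 := by
    rintro rfl
    rw [Int.cast_zero, zero_mul, zero_add] at hmn
    have hn1 : (1 : ℤ) ≤ n := by
      by_contra h
      push_neg at h
      have : n ≤ 0 := by omega
      have : (n : ℝ) * Real.pi ≤ 0 := mul_nonpos_of_nonpos_of_nonneg (by exact_mod_cast this) hπ.le
      linarith
    have : (1 : ℝ) ≤ (n : ℝ) := by exact_mod_cast hn1
    nlinarith
  rcases hm0.lt_or_gt with hmneg | hmpos
  · obtain ⟨j, hjK, M, hge, hlt⟩ := nat_step_lemma s (-x) hs1 (max K 1)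
    have hj1 : 1 ≤ j := le_trans (le_max_right _ _) hjK
    refine ⟨j * (-m).toNat, ?_, ?_, j * n - M, ?_⟩
    · calc K ≤ max K 1 := le_max_left _ _
        _ ≤ j := hjK
        _ ≤ j * (-m).toNat := Nat.le_mul_of_pos_right j (by omega)
    · exact Nat.mul_pos (by omega) (by omega)
    · have hk : ((j * (-m).toNat : ℕ) : ℝ) = (j : ℝ) * (-(m : ℝ)) := by
        have h : (((-m).toNat : ℤ) : ℝ) = -(m : ℝ) := by
          rw [Int.toNat_of_nonneg (by omega)]; push_cast; ring
        push_cast at h ⊢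
        rw [h]
      have heq : ((j * (-m).toNat : ℕ) : ℝ) * θ - (x + ((j * n - M : ℤ) : ℝ) * Real.pi) =
          -((j : ℝ) * s - (-x + M * Real.pi)) := by
        rw [hk]
        push_cast
        linear_combination (-(j : ℝ)) * hmn
      rw [heq, abs_neg, abs_lt]
      constructor <;> linarith
  · obtain ⟨j, hjK, M, hge, hlt⟩ := nat_step_lemma s x hs1 (max K 1)
    have hj1 : 1 ≤ j := le_trans (le_max_right _ _) hjK
    refine ⟨j * m.toNat, ?_, ?_, M - j * n, ?_⟩
    · calc K ≤ max K 1 := le_max_left _ _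
        _ ≤ j := hjK
        _ ≤ j * m.toNat := Nat.le_mul_of_pos_right j (by omega)
    · exact Nat.mul_pos (by omega) (by omega)
    · have hk : ((j * m.toNat : ℕ) : ℝ) = (j : ℝ) * (m : ℝ) := by
        have h : ((m.toNat : ℤ) : ℝ) = (m : ℝ) := by
          rw [Int.toNat_of_nonneg (by omega)]
        push_cast at h ⊢
        rw [h]
      have heq : ((j * m.toNat : ℕ) : ℝ) * θ - (x + ((M - j * n : ℤ) : ℝ) * Real.pi) =
          (j : ℝ) * s - (x + M * Real.pi) := by
        rw [hk]
        push_cast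
        linear_combination (j : ℝ) * hmn
      rw [heq, abs_lt]
      constructor <;> linarith

set_option maxHeartbeats 2000000 in
/-- Let `a > 1` be real and `θ` an irrational multiple of `π`. Then the set
`{(k/(a e^{iθ}) − l) / (a^k e^{ikθ} (−1)^l) : k, l ∈ ℕ}` is dense in `ℂ`
(here `ℕ` consists of the positive integers). -/
theorem dense_complex_quotient_set (a θ : ℝ) (ha : 1 < a)
    (hθ : Irrational (θ / Real.pi)) :
    Dense {z : ℂ | ∃ k l : ℕ, 0 < k ∧ 0 < l ∧
      z = ((k : ℂ) / ((a : ℂ) * Complex.exp (θ * Complex.I)) - (l : ℂ)) /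
        ((a : ℂ) ^ k * Complex.exp ((k : ℂ) * θ * Complex.I) * (-1 : ℂ) ^ l)} := by
  have ha0 : (0 : ℝ) < a := lt_trans one_pos ha
  have hane : (a : ℂ) ≠ 0 := by exact_mod_cast ha0.ne'
  have hexp : ∀ x : ℝ, Complex.exp ((x : ℂ) * Complex.I) =
      ((Real.cos x : ℝ) : ℂ) + ((Real.sin x : ℝ) : ℂ) * Complex.I := fun x => by
    rw [Complex.exp_mul_I, ← Complex.ofReal_cos, ← Complex.ofReal_sin]
  have hEne : Complex.exp ((θ : ℂ) * Complex.I) ≠ 0 := Complex.exp_ne_zero _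
  -- |D| computation
  have hDabs : ∀ k l : ℕ, ‖((a : ℂ) ^ k *
      Complex.exp ((k : ℂ) * θ * Complex.I) * (-1 : ℂ) ^ l)‖ = a ^ k := by
    intro k l
    have h : ((k : ℕ) : ℂ) * (θ : ℂ) * Complex.I = (((k : ℝ) * θ : ℝ) : ℂ) * Complex.I := by
      push_cast; ring
    rw [h, norm_mul, norm_mul, norm_pow, norm_pow, Complex.norm_real,
      Complex.norm_exp_ofReal_mul_I, Real.norm_eq_abs, abs_of_pos ha0]
    simp
  have hDne : ∀ k l : ℕ, ((a : ℂ) ^ k *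
      Complex.exp ((k : ℂ) * θ * Complex.I) * (-1 : ℂ) ^ l) ≠ 0 := by
    intro k l
    intro h
    have := hDabs k l
    rw [h, norm_zero] at this
    have : (0:ℝ) < a ^ k := by positivity
    linarith
  -- limit facts
  have t1 : Filter.Tendsto (fun n : ℕ => ((n : ℝ)) ^ 1 / a ^ n) Filter.atTop (nhds 0) :=
    tendsto_pow_const_div_const_pow_of_one_lt 1 ha
  have t0 : Filter.Tendsto (fun n : ℕ => ((n : ℝ)) ^ 0 / a ^ n) Filter.atTop (nhds 0) :=
    tendsto_pow_const_div_const_pow_of_one_lt 0 ha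
  have tg : Filter.Tendsto (fun n : ℕ => (3 + (n : ℝ) / a) / a ^ n) Filter.atTop (nhds 0) := by
    have h2 := (t0.const_mul (3 : ℝ)).add (t1.const_mul (1 / a))
    simp only [mul_zero, add_zero] at h2
    refine h2.congr fun n => ?_
    have hpow : (0 : ℝ) < a ^ n := by positivity
    field_simp
  rw [Metric.dense_iff]
  intro w ε hε
  by_cases hw : w = 0
  · -- easy case : approximate 0
    subst hw
    have hev : ∀ᶠ n : ℕ in Filter.atTop, (3 + (n : ℝ) / a) / a ^ n < ε :=
      tg.eventually_lt_const hε
    obtain ⟨K, hK⟩ := Filter.eventually_atTop.mp hev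
    set k := max K 1 with hk
    have hk1 : 1 ≤ k := le_max_right _ _
    have hkK : K ≤ k := le_max_left _ _
    refine ⟨((k : ℂ) / ((a : ℂ) * Complex.exp (θ * Complex.I)) - (1 : ℂ)) /
        ((a : ℂ) ^ k * Complex.exp ((k : ℂ) * θ * Complex.I) * (-1 : ℂ) ^ 1),
      ?_, ⟨k, 1, by omega, one_pos, by norm_num⟩⟩
    rw [Metric.mem_ball, Complex.dist_eq, sub_zero, norm_div, hDabs k 1]
    have hnum : ‖((k : ℂ) / ((a : ℂ) * Complex.exp (θ * Complex.I)) - 1)‖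
        ≤ (k : ℝ) / a + 1 := by
      refine le_trans (norm_sub_le _ _) ?_
      have : ‖((k : ℂ) / ((a : ℂ) * Complex.exp (θ * Complex.I)))‖ = (k : ℝ) / a := by
        rw [norm_div, norm_mul]
        simp [Complex.norm_real, Complex.norm_exp_ofReal_mul_I, abs_of_pos ha0]
      rw [this, norm_one]
    have hpow : (0 : ℝ) < a ^ k := by positivity
    calc ‖((k : ℂ) / ((a : ℂ) * Complex.exp (θ * Complex.I)) - 1)‖ / a ^ k
        ≤ ((k : ℝ) / a + 1) / a ^ k := by gcongr
      _ ≤ (3 + (k : ℝ) / a) / a ^ k := (div_le_div_iff_of_pos_right hpow).mpr (by linarith)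
      _ < ε := hK k hkK
  · -- main case : w ≠ 0
    obtain ⟨r, hr⟩ : ∃ x : ℝ, x = ‖w‖ := ⟨_, rfl⟩
    have hr0 : 0 < r := by
      rw [hr]
      exact norm_pos_iff.mpr hw
    obtain ⟨φ, hφ⟩ : ∃ x : ℝ, x = Complex.arg w := ⟨_, rfl⟩
    obtain ⟨δ, hδ⟩ : ∃ x : ℝ, x = min (1/2 : ℝ) (ε / (2 * r)) := ⟨_, rfl⟩
    have hδ0 : 0 < δ := by rw [hδ]; exact lt_min (by norm_num) (by positivity)
    have hδhalf : δ ≤ 1/2 := by rw [hδ]; exact min_le_left _ _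
    have hrδ : r * δ ≤ ε / 2 := by
      have h1 : δ ≤ ε / (2 * r) := by rw [hδ]; exact min_le_right _ _
      have h2 : r * δ ≤ r * (ε / (2 * r)) := mul_le_mul_of_nonneg_left h1 hr0.le
      have h3 : r * (ε / (2 * r)) = ε / 2 := by field_simp
      linarith
    -- pick K
    have hev : ∀ᶠ n : ℕ in Filter.atTop,
        (3 + (n : ℝ) / a) / a ^ n < min (ε / 2) (r / 2) :=
      tg.eventually_lt_const (lt_min (half_pos hε) (half_pos hr0))
    obtain ⟨K, hK⟩ := Filter.eventually_atTop.mp hev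
    -- pick k
    obtain ⟨k, hkK, hk0, M, hM⟩ := exists_nat_mul_near_mod_pi hθ (-φ) K hδ0
    have hgk := hK k hkK
    have hpow : (0 : ℝ) < a ^ k := by positivity
    have hka : (0 : ℝ) ≤ (k : ℝ) / a := by positivity
    obtain ⟨ψ, hψ⟩ : ∃ x : ℝ, x = φ + (k : ℝ) * θ := ⟨_, rfl⟩
    have hu : |ψ - M * Real.pi| < δ := by
      have : ψ - M * Real.pi = (k : ℝ) * θ - (-φ + M * Real.pi) := by rw [hψ]; ring
      rw [this]; exact hM
    obtain ⟨C, hC⟩ : ∃ x : ℝ, x = Real.cos ψ := ⟨_, rfl⟩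
    obtain ⟨S, hSdef⟩ : ∃ x : ℝ, x = Real.sin ψ := ⟨_, rfl⟩
    have hS : |S| ≤ δ := by
      have h1 : (-1 : ℝ) ^ M * Real.sin (ψ - M * Real.pi) = S := by
        rw [← Real.sin_add_int_mul_pi, hSdef]
        congr 1
        ring
      rw [← h1, abs_mul]
      have h2 : |(-1 : ℝ) ^ M| = 1 := by
        rcases Int.even_or_odd M with he | ho
        · rw [he.neg_one_zpow, abs_one]
        · rw [ho.neg_one_zpow, abs_neg, abs_one]
      rw [h2, one_mul]
      exact le_trans (Real.abs_sin_le_abs) hu.le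
    have hCb : 1/2 ≤ |C| := by
      have h1 : S ^ 2 + C ^ 2 = 1 := by
        rw [hSdef, hC]; exact Real.sin_sq_add_cos_sq ψ
      nlinarith [sq_abs S, sq_abs C, abs_nonneg S, abs_nonneg C, hS, hδhalf]
    -- choose l
    have hrk : 3 + (k : ℝ) / a ≤ a ^ k * (r / 2) := by
      have h1 : (3 + (k : ℝ) / a) / a ^ k < r / 2 := lt_of_lt_of_le hgk (min_le_right _ _)
      have h2 := (div_lt_iff₀ hpow).mp h1
      linarith [h2]
    obtain ⟨L, hL⟩ : ∃ x : ℝ, x = (k : ℝ) / a * Real.cos θ + a ^ k * r * |C| := ⟨_, rfl⟩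
    have hL3 : 3 ≤ L := by
      have h5 : a ^ k * r * (1/2) ≤ a ^ k * r * |C| :=
        mul_le_mul_of_nonneg_left hCb (by positivity)
      have h6 : -((k : ℝ) / a) ≤ (k : ℝ) / a * Real.cos θ := by
        nlinarith [Real.neg_one_le_cos θ, hka]
      rw [hL]
      linarith [h5, h6, hrk]
    obtain ⟨j, hj⟩ : ∃ x : ℕ, x = ⌊L / 2⌋₊ := ⟨_, rfl⟩
    have hj1 : 1 ≤ j := by
      rw [hj]; exact Nat.le_floor (by push_cast; linarith)
    have hjle : (j : ℝ) ≤ L / 2 := by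
      rw [hj]; exact Nat.floor_le (by linarith)
    have hjgt : L / 2 < (j : ℝ) + 1 := by
      rw [hj]; exact Nat.lt_floor_add_one _
    obtain ⟨p, hp⟩ : ∃ x : ℕ, x = if 0 < C then 1 else 0 := ⟨_, rfl⟩
    have hple : (p : ℝ) ≤ 1 := by rw [hp]; split <;> norm_num
    have hpge : (0 : ℝ) ≤ (p : ℝ) := Nat.cast_nonneg _
    obtain ⟨l, hl⟩ : ∃ x : ℕ, x = 2 * j + p := ⟨_, rfl⟩
    have hl0 : 0 < l := by rw [hl]; omega
    have hlcast : (l : ℝ) = 2 * (j : ℝ) + (p : ℝ) := by rw [hl]; push_cast; ring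
    have hlL : |(l : ℝ) - L| ≤ 2 := by
      rw [abs_le]
      constructor
      · rw [hlcast]; linarith
      · rw [hlcast]; linarith
    obtain ⟨σ, hσ⟩ : ∃ x : ℝ, x = (-1 : ℝ) ^ l := ⟨_, rfl⟩
    have hsign : σ * C = -|C| := by
      have h1 : σ = (-1 : ℝ) ^ p := by
        rw [hσ, hl, pow_add, pow_mul]
        norm_num
      rw [h1]
      by_cases hCpos : 0 < C
      · rw [hp, if_pos hCpos, pow_one, abs_of_pos hCpos]; ring
      · push_neg at hCpos
        rw [hp, if_neg (not_lt.mpr hCpos), pow_zero, abs_of_nonpos hCpos]; ring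
    obtain ⟨A, hA⟩ : ∃ x : ℝ, x = (k : ℝ) / a * Real.cos θ - l - σ * (a ^ k * r) * C := ⟨_, rfl⟩
    obtain ⟨B, hB⟩ : ∃ x : ℝ, x = -((k : ℝ) / a * Real.sin θ) - σ * (a ^ k * r) * S := ⟨_, rfl⟩
    have hAval : A = L - l := by
      rw [hA, hL]
      linear_combination (-(a ^ k * r)) * hsign
    have hAbound : |A| ≤ 2 := by
      rw [hAval, abs_sub_comm]
      exact hlL
    have hBbound : |B| ≤ (k : ℝ) / a + a ^ k * r * δ := by
      have h1 : B = (-((k : ℝ) / a * Real.sin θ)) + (-(σ * (a ^ k * r) * S)) := by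
        rw [hB]; ring
      rw [h1]
      refine le_trans (abs_add_le _ _) ?_
      have h2 : |-((k : ℝ) / a * Real.sin θ)| ≤ (k : ℝ) / a := by
        rw [abs_neg, abs_mul, abs_of_nonneg hka]
        exact mul_le_of_le_one_right hka (Real.abs_sin_le_one θ)
      have h3 : |-(σ * (a ^ k * r) * S)| ≤ a ^ k * r * δ := by
        rw [abs_neg, abs_mul, abs_mul, hσ, abs_pow, abs_neg, abs_one, one_pow, one_mul,
          abs_of_pos (by positivity : (0:ℝ) < a ^ k * r)]
        exact mul_le_mul_of_nonneg_left hS (by positivity)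
      linarith
    -- complex identities
    have hEinv : (Complex.exp ((θ : ℂ) * Complex.I))⁻¹ =
        ((Real.cos θ : ℝ) : ℂ) - ((Real.sin θ : ℝ) : ℂ) * Complex.I := by
      rw [← Complex.exp_neg]
      have h1 : -((θ : ℂ) * Complex.I) = ((-θ : ℝ) : ℂ) * Complex.I := by push_cast; ring
      rw [h1, hexp, Real.cos_neg, Real.sin_neg]
      push_cast
      ring
    have h1 : (k : ℂ) / ((a : ℂ) * Complex.exp ((θ : ℂ) * Complex.I)) =
        (k : ℂ) * ((a : ℂ))⁻¹ * (((Real.cos θ : ℝ) : ℂ) - ((Real.sin θ : ℝ) : ℂ) * Complex.I) := by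
      rw [div_eq_mul_inv, mul_inv, hEinv]
      ring
    have hwexp : w = (r : ℂ) * Complex.exp ((φ : ℂ) * Complex.I) := by
      rw [hr, hφ]; exact (Complex.norm_mul_exp_arg_mul_I w).symm
    have hprod : Complex.exp ((φ : ℂ) * Complex.I) * Complex.exp ((k : ℂ) * (θ:ℂ) * Complex.I) =
        ((C : ℝ) : ℂ) + ((S : ℝ) : ℂ) * Complex.I := by
      rw [← Complex.exp_add,
        show (φ : ℂ) * Complex.I + (k : ℂ) * (θ:ℂ) * Complex.I = ((ψ : ℝ) : ℂ) * Complex.I by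
          rw [hψ]; push_cast; ring,
        hexp, hC, hSdef]
    have hneg : ((-1 : ℂ)) ^ l = ((σ : ℝ) : ℂ) := by
      rw [hσ]
      push_cast
      ring
    have hwD : w * ((a : ℂ) ^ k * Complex.exp ((k : ℂ) * (θ:ℂ) * Complex.I) * (-1 : ℂ) ^ l) =
        ((σ : ℝ) : ℂ) * (((a:ℝ) ^ k * r : ℝ) : ℂ) * (((C : ℝ) : ℂ) + ((S : ℝ) : ℂ) * Complex.I) := by
      rw [hwexp, hneg]
      push_cast
      linear_combination ((r : ℂ) * ((a : ℂ)) ^ k * ((σ : ℝ) : ℂ)) * hprod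
    have hN : (k : ℂ) / ((a : ℂ) * Complex.exp ((θ:ℂ) * Complex.I)) - (l : ℂ) -
        w * ((a : ℂ) ^ k * Complex.exp ((k : ℂ) * (θ:ℂ) * Complex.I) * (-1 : ℂ) ^ l) =
        ((A : ℝ) : ℂ) + ((B : ℝ) : ℂ) * Complex.I := by
      rw [h1, hwD, hA, hB]
      push_cast
      ring
    -- put it together
    obtain ⟨D, hD⟩ : ∃ x : ℂ, x = (a : ℂ) ^ k * Complex.exp ((k : ℂ) * (θ:ℂ) * Complex.I) * (-1 : ℂ) ^ l := ⟨_, rfl⟩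
    have hDne' : D ≠ 0 := by rw [hD]; exact hDne k l
    obtain ⟨z, hz⟩ : ∃ x : ℂ, x = ((k : ℂ) / ((a : ℂ) * Complex.exp ((θ:ℂ) * Complex.I)) - (l : ℂ)) / D := ⟨_, rfl⟩
    have hzw : z - w = (((A : ℝ) : ℂ) + ((B : ℝ) : ℂ) * Complex.I) / D := by
      rw [hz, hD, ← hN]
      rw [eq_div_iff (hDne k l), sub_mul, div_mul_cancel₀ _ (hDne k l)]
    refine ⟨z, ?_, ⟨k, l, hk0, hl0, by rw [hz, hD]⟩⟩
    rw [Metric.mem_ball, Complex.dist_eq, hzw, norm_div, hD, hDabs k l]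
    have habsN : ‖(((A : ℝ) : ℂ) + ((B : ℝ) : ℂ) * Complex.I)‖ ≤ |A| + |B| := by
      have := Complex.norm_le_abs_re_add_abs_im (((A : ℝ) : ℂ) + ((B : ℝ) : ℂ) * Complex.I)
      simpa using this
    have hg2 : (2 + (k : ℝ) / a) / a ^ k < ε / 2 := by
      have h4 : (2 + (k : ℝ) / a) / a ^ k ≤ (3 + (k : ℝ) / a) / a ^ k :=
        (div_le_div_iff_of_pos_right hpow).mpr (by linarith)
      exact lt_of_le_of_lt h4 (lt_of_lt_of_le hgk (min_le_left _ _))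
    calc ‖(((A : ℝ) : ℂ) + ((B : ℝ) : ℂ) * Complex.I)‖ / a ^ k
        ≤ (|A| + |B|) / a ^ k := (div_le_div_iff_of_pos_right hpow).mpr habsN
      _ ≤ (2 + ((k : ℝ) / a + a ^ k * r * δ)) / a ^ k :=
          (div_le_div_iff_of_pos_right hpow).mpr (by linarith)
      _ = (2 + (k : ℝ) / a) / a ^ k + r * δ := by field_simp; ring
      _ < ε / 2 + ε / 2 := by
          have := hrδ
          linarith
      _ = ε := by ring
end
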